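/- For x > 0 define w(x) = e^{1/(2x²)} · ∫_0^x e^{-1/(2t²)} · t^{-2} dt (the integrand extended by 0 at t = 0). Then w is differentiable on (0,∞) and satisfies x³ · w′(x) + w(x) = x for all x > 0; moreover w(1) = √e · ∫_1^∞ e^{-t²/2} dt. -/

import Mathlib

/-!
With `u = 1/(2t²)` the integrand is `2 u e^{-u} ≤ 2`, so it is integrable near `0` and the
fundamental theorem of calculus differentiates the integral. The product rule, together with
`e^{1/(2x²)} · e^{-1/(2x²)} / x² = 1 / x²`, gives `w' = (x - w) / x³`. The substitution `t ↦ 1/t`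
carries the integrand on `(0, x)` to the Gaussian `e^{-s²/2}` on `(1/x, ∞)`.
-/

open MeasureTheory Set Real Filter Topology

theorem hasDerivAt_setIntegral_Ioo {E : Type*} [NormedAddCommGroup E] [NormedSpace ℝ E]
    [CompleteSpace E] {f : ℝ → E} {a x : ℝ} (hax : a < x) (hf : IntegrableOn f (Ioc a x))
    (hmeas : StronglyMeasurableAtFilter f (𝓝 x)) (hcont : ContinuousAt f x) :
    HasDerivAt (fun y => ∫ t in Ioo a y, f t) (f x) x := by
  have hFTC : HasDerivAt (fun y => ∫ t in a..y, f t) (f x) x :=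
    intervalIntegral.integral_hasDerivAt_right
      ((intervalIntegrable_iff_integrableOn_Ioc_of_le hax.le).2 hf) hmeas hcont
  refine hFTC.congr_of_eventuallyEq ?_
  filter_upwards [eventually_gt_nhds hax] with y hy
  rw [intervalIntegral.integral_of_le hy.le, integral_Ioc_eq_integral_Ioo]

noncomputable def eulerIntegrand (t : ℝ) : ℝ := exp (-1 / (2 * t ^ 2)) / t ^ 2

noncomputable def eulerW (x : ℝ) : ℝ := exp (1 / (2 * x ^ 2)) * ∫ t in Ioo 0 x, eulerIntegrand t

theorem eulerIntegrand_eq_two_mul_mul_exp_neg (t : ℝ) :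
    eulerIntegrand t = 2 * ((2 * t ^ 2)⁻¹ * exp (-(2 * t ^ 2)⁻¹)) := by
  rw [eulerIntegrand, neg_div, one_div]
  ring

theorem eulerIntegrand_nonneg (t : ℝ) : 0 ≤ eulerIntegrand t := by
  unfold eulerIntegrand
  positivity

theorem eulerIntegrand_le_two (t : ℝ) : eulerIntegrand t ≤ 2 := by
  rw [eulerIntegrand_eq_two_mul_mul_exp_neg]
  have hmax := mul_exp_neg_le_exp_neg_one (2 * t ^ 2)⁻¹
  have hexp := exp_le_one_iff.2 (by norm_num : (-1 : ℝ) ≤ 0)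
  linarith

theorem measurable_eulerIntegrand : Measurable eulerIntegrand := by
  unfold eulerIntegrand
  fun_prop

theorem continuousAt_eulerIntegrand {x : ℝ} (hx : x ≠ 0) : ContinuousAt eulerIntegrand x := by
  unfold eulerIntegrand
  fun_prop (disch := positivity)

theorem integrableOn_eulerIntegrand_Ioc (b : ℝ) : IntegrableOn eulerIntegrand (Ioc 0 b) := by
  refine Measure.integrableOn_of_bounded measure_Ioc_lt_top.ne
    measurable_eulerIntegrand.aestronglyMeasurable (M := 2) (Eventually.of_forall fun t => ?_)
  rw [norm_of_nonneg (eulerIntegrand_nonneg t)]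
  exact eulerIntegrand_le_two t

theorem exp_mul_eulerIntegrand (x : ℝ) : exp (1 / (2 * x ^ 2)) * eulerIntegrand x = 1 / x ^ 2 := by
  rw [eulerIntegrand, ← mul_div_assoc, ← exp_add, neg_div, add_neg_cancel, exp_zero]

theorem hasDerivAt_exp_one_div_two_mul_sq {x : ℝ} (hx : x ≠ 0) :
    HasDerivAt (fun y => exp (1 / (2 * y ^ 2))) (-exp (1 / (2 * x ^ 2)) / x ^ 3) x := by
  have hquot : HasDerivAt (fun y => 1 / (2 * y ^ 2)) (-(4 * x) / (2 * x ^ 2) ^ 2) x :=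
    ((hasDerivAt_const x 1).div ((hasDerivAt_pow 2 x).const_mul 2) (by positivity)).congr_deriv
      (by norm_num; ring)
  refine hquot.exp.congr_deriv ?_
  field_simp
  ring

theorem hasDerivAt_eulerW {x : ℝ} (hx : 0 < x) :
    HasDerivAt eulerW ((x - eulerW x) / x ^ 3) x := by
  have hI := hasDerivAt_setIntegral_Ioo hx (integrableOn_eulerIntegrand_Ioc x)
    measurable_eulerIntegrand.stronglyMeasurable.stronglyMeasurableAtFilter
    (continuousAt_eulerIntegrand hx.ne')
  refine ((hasDerivAt_exp_one_div_two_mul_sq hx.ne').mul hI).congr_deriv ?_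
  rw [exp_mul_eulerIntegrand, eulerW]
  field_simp
  ring

theorem setIntegral_Ioo_eulerIntegrand {x : ℝ} (hx : 0 < x) :
    ∫ t in Ioo 0 x, eulerIntegrand t = ∫ s in Ioi x⁻¹, exp (-s ^ 2 / 2) := by
  have himage : Inv.inv '' Ioo 0 x = Ioi x⁻¹ := by
    rw [image_inv_eq_inv, inv_Ioo_0_left hx]
  rw [← himage, integral_image_eq_integral_abs_deriv_smul measurableSet_Ioo
    (fun t ht => (hasDerivAt_inv ht.1.ne').hasDerivWithinAt) inv_injective.injOn]
  refine setIntegral_congr_fun measurableSet_Ioo fun t ht => ?_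
  rw [eulerIntegrand, abs_neg, abs_inv, abs_pow, abs_of_pos ht.1, smul_eq_mul]
  field_simp

theorem euler_ODE_section29 :
    (∀ x : ℝ, 0 < x → ∃ d : ℝ,
      HasDerivAt
        (fun y : ℝ => Real.exp (1 / (2 * y ^ 2)) *
          ∫ t in Set.Ioo (0 : ℝ) y, Real.exp (-1 / (2 * t ^ 2)) / t ^ 2) d x ∧
      x ^ 3 * d +
        Real.exp (1 / (2 * x ^ 2)) *
          (∫ t in Set.Ioo (0 : ℝ) x, Real.exp (-1 / (2 * t ^ 2)) / t ^ 2) = x) ∧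
    Real.exp (1 / (2 * (1 : ℝ) ^ 2)) *
        (∫ t in Set.Ioo (0 : ℝ) 1, Real.exp (-1 / (2 * t ^ 2)) / t ^ 2) =
      Real.sqrt (Real.exp 1) * ∫ t in Set.Ioi (1 : ℝ), Real.exp (-t ^ 2 / 2) := by
  refine ⟨fun x hx => ⟨(x - eulerW x) / x ^ 3, hasDerivAt_eulerW hx, ?_⟩, ?_⟩
  · change x ^ 3 * ((x - eulerW x) / x ^ 3) + eulerW x = x
    field_simp
    ring
  · change eulerW 1 = _
    rw [eulerW, setIntegral_Ioo_eulerIntegrand one_pos, inv_one, sqrt_eq_rpow, ← exp_mul]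
    norm_num
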